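/- Let s = 2, with coefficient matrices D = (1/15)·[[16,−1],[16,−1]], A = (1/480)·[[75,106],[−1440,736]], R = diag(21/32, 3), and abscissas c = (−1/2, 0)ᵀ (the parallel-efficient A-stable implicit method iEIS+(2,3) with diagonal R). Then the truncation error vectors of this method satisfy: τ₀ = 0, τ₁ = 0 (order conditions with p = 1), the EIS+ conditions D τ₂ = 0, D τ₃ = 0, and D(A + R) τ₂ = 0; moreover τ₂ = (31/120, 62/15)ᵀ = (1/120)·(31, 496)ᵀ. -/

import Mathlib

/-- The truncation error vectors of the general linear method with coefficient matrices
`D, A, R` and abscissas `c`: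
`τ₀ = (I - D)𝟙` and, for `j ≥ 1`,
`τ_j = (1/(j-1)!)·((1/j)·D(c-𝟙)^j + A(c-𝟙)^(j-1) + R c^(j-1) - (1/j)·c^j)`
(powers of vectors taken componentwise). -/
noncomputable def tauVec (s : ℕ) (D A R : Matrix (Fin s) (Fin s) ℝ) (c : Fin s → ℝ) :
    ℕ → (Fin s → ℝ)
  | 0 => ((fun _ => (1 : ℝ)) : Fin s → ℝ) - D.mulVec ((fun _ => (1 : ℝ)) : Fin s → ℝ)
  | (j + 1) => (1 / (Nat.factorial j : ℝ)) •
      ((1 / ((j : ℝ) + 1)) • D.mulVec (fun i => (c i - 1) ^ (j + 1))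
        + A.mulVec (fun i => (c i - 1) ^ j)
        + R.mulVec (fun i => c i ^ j)
        - (1 / ((j : ℝ) + 1)) • (fun i => c i ^ (j + 1)))

/-- Coefficient matrix `D` of the parallel-efficient A-stable implicit method iEIS+(2,3). -/
noncomputable def Dp23 : Matrix (Fin 2) (Fin 2) ℝ := (1 / 15 : ℝ) • !![16, -1; 16, -1]

/-- Coefficient matrix `A` of the parallel-efficient A-stable implicit method iEIS+(2,3). -/
noncomputable def Ap23 : Matrix (Fin 2) (Fin 2) ℝ :=
  (1 / 480 : ℝ) • !![75, 106; -1440, 736]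

/-- Coefficient matrix `R = diag(21/32, 3)` of the parallel-efficient A-stable implicit
method iEIS+(2,3); `R` is diagonal, so the implicit stage equations can be solved
concurrently. -/
noncomputable def Rp23 : Matrix (Fin 2) (Fin 2) ℝ := Matrix.diagonal ![21 / 32, 3]

/-- Abscissas of the parallel-efficient A-stable implicit method iEIS+(2,3). -/
noncomputable def cp23 : Fin 2 → ℝ := ![-1 / 2, 0]

/-!
Both rows of `D` equal `(16, -1)/15`, so `D v = 0` exactly when `v₁ = 16 v₀`.
Computing `τ₂ = (31/120, 496/120)`, `τ₃ = -(1151/5760)(1, 16)` and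
`(A + R)τ₂ = (32333/28800)(1, 16)` exhibits this proportionality in all three EIS+ conditions.
-/

open Matrix

theorem Dp23_mulVec (v : Fin 2 → ℝ) : Dp23 *ᵥ v = fun _ => (16 * v 0 - v 1) / 15 := by
  ext i; fin_cases i <;> norm_num [Dp23, mulVec, dotProduct] <;> ring

theorem Dp23_mulVec_eq_zero_iff (v : Fin 2 → ℝ) : Dp23 *ᵥ v = 0 ↔ v 1 = 16 * v 0 := by
  rw [Dp23_mulVec, funext_iff]
  simp only [Pi.zero_apply, forall_const]
  constructor <;> intro h <;> linarith

theorem tauVec_p23_zero : tauVec 2 Dp23 Ap23 Rp23 cp23 0 = 0 := by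
  ext i; fin_cases i <;> norm_num [tauVec, Dp23, dotProduct]

theorem tauVec_p23_one : tauVec 2 Dp23 Ap23 Rp23 cp23 1 = 0 := by
  ext i; fin_cases i <;> norm_num [tauVec, Dp23, Ap23, Rp23, cp23, dotProduct]

theorem tauVec_p23_two : tauVec 2 Dp23 Ap23 Rp23 cp23 2 = ![31 / 120, 62 / 15] := by
  ext i; fin_cases i <;> norm_num [tauVec, Dp23, Ap23, Rp23, cp23, dotProduct, vecHead, vecTail]

theorem tauVec_p23_three : tauVec 2 Dp23 Ap23 Rp23 cp23 3 = ![-1151 / 5760, -1151 / 360] := by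
  ext i
  fin_cases i <;>
    norm_num [tauVec, Dp23, Ap23, Rp23, cp23, dotProduct, vecHead, vecTail, Nat.factorial]

theorem Ap23_add_Rp23_mulVec :
    (Ap23 + Rp23) *ᵥ ![31 / 120, 62 / 15] = ![32333 / 28800, 32333 / 1800] := by
  ext i; fin_cases i <;> norm_num [Ap23, Rp23]

/-- **The parallel-efficient A-stable implicit method iEIS+(2,3) satisfies the order
conditions with `p = 1` and the EIS+ conditions**: `τ₀ = τ₁ = 0`, `Dτ₂ = 0`, `Dτ₃ = 0`,
`D(A+R)τ₂ = 0`; moreover `τ₂ = (31/120, 62/15)ᵀ = (1/120)·(31, 496)ᵀ`. -/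
theorem iEIS23_parallel_conditions :
    tauVec 2 Dp23 Ap23 Rp23 cp23 0 = 0 ∧
    tauVec 2 Dp23 Ap23 Rp23 cp23 1 = 0 ∧
    Dp23.mulVec (tauVec 2 Dp23 Ap23 Rp23 cp23 2) = 0 ∧
    Dp23.mulVec (tauVec 2 Dp23 Ap23 Rp23 cp23 3) = 0 ∧
    Dp23.mulVec ((Ap23 + Rp23).mulVec (tauVec 2 Dp23 Ap23 Rp23 cp23 2)) = 0 ∧
    tauVec 2 Dp23 Ap23 Rp23 cp23 2 = ![31 / 120, 62 / 15] ∧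
    tauVec 2 Dp23 Ap23 Rp23 cp23 2 = (1 / 120 : ℝ) • ![31, 496] := by
  rw [tauVec_p23_two, tauVec_p23_three, Ap23_add_Rp23_mulVec, Dp23_mulVec_eq_zero_iff,
    Dp23_mulVec_eq_zero_iff, Dp23_mulVec_eq_zero_iff]
  refine ⟨tauVec_p23_zero, tauVec_p23_one, ?_, ?_, ?_, rfl, ?_⟩
  all_goals norm_num
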